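/- For a Newton polygon N₁ = Σᵢ {ℓᵢ/hᵢ} of finite area, h(N₁ * N₁) = Σ_{i,j} min(ℓᵢh_j, ℓ_j hᵢ) = 2·Vol(N₁), where Vol(N₁) is the area of the complement in ℝ≥0² of the convex region bounded by N₁. -/

import Mathlib

/-!
Sort the edges `{ℓᵢ/hᵢ}` by decreasing slope `hᵢ/ℓᵢ`; neither side of the claim changes under
permutation. The Minkowski sum is then the epigraph over `x ≥ 0` of the convex piecewise linear
function `boundary L`, which runs down the edges in this order: the first edge contributes the ramp
`h₁ · clip (1 - x/ℓ₁)` and the remaining edges are shifted right by `ℓ₁`. So the height is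
`boundary L 0 = Σ hᵢ`, which for `prodList L L` is `Σ_{i,j} min(ℓᵢh_j, ℓ_jhᵢ)`. The area under
`boundary L` is the triangle `ℓ₁h₁/2`, plus the rectangle `ℓ₁ Σ_{j>1} h_j` below the later edges,
plus the area for the tail; since `min(ℓ₁h_j, ℓ_jh₁) = ℓ₁h_j` by sortedness, half the double sum
satisfies the same recursion.
-/

open Pointwise MeasureTheory

/-- The positive quadrant in `ℝ²`. -/
def Q2 : Set (ℝ × ℝ) := {p | 0 ≤ p.1 ∧ 0 ≤ p.2}

/-- The elementary Newton polygon `{ℓ/h}`. -/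
noncomputable def elemPoly (l h : ℝ) : Set (ℝ × ℝ) :=
  convexHull ℝ (({((0 : ℝ), h)} + Q2) ∪ ({(l, (0 : ℝ))} + Q2))

/-- The sum (convex hull of the Minkowski sum) of the elementary polygons listed in `L`. -/
noncomputable def sumList (L : List (ℝ × ℝ)) : Set (ℝ × ℝ) :=
  convexHull ℝ (Q2 + (L.map (fun p => elemPoly p.1 p.2)).sum)

/-- The sum of two Newton polygons: convex hull of the Minkowski sum. -/
noncomputable def polySum (N₁ N₂ : Set (ℝ × ℝ)) : Set (ℝ × ℝ) :=
  convexHull ℝ (N₁ + N₂)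

/-- The product of decompositions: on elementary polygons,
`{ℓ/h} * {ℓ'/h'} = {ℓℓ' / min(ℓh', ℓ'h)}`, extended bilinearly. -/
def prodList (L₁ L₂ : List (ℝ × ℝ)) : List (ℝ × ℝ) :=
  L₁.flatMap fun p => L₂.map fun q => (p.1 * q.1, min (p.1 * q.2) (q.1 * p.2))

/-- All lengths and heights in the list are positive. -/
def PosList (L : List (ℝ × ℝ)) : Prop := ∀ p ∈ L, 0 < p.1 ∧ 0 < p.2

/-- The height of a Newton polygon: its intercept with the vertical axis. -/
noncomputable def polyHt (N : Set (ℝ × ℝ)) : ℝ := sInf {y | (0, y) ∈ N}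

/-- The area enclosed by a Newton polygon: the area of the complement of the region in the
positive quadrant. -/
noncomputable def polyVol (N : Set (ℝ × ℝ)) : ℝ := (volume (Q2 \ N)).toReal

lemma PosList.of_cons {p : ℝ × ℝ} {L : List (ℝ × ℝ)} (hL : PosList (p :: L)) : PosList L :=
  fun q hq => hL q (List.mem_cons_of_mem _ hq)

lemma PosList.head {p : ℝ × ℝ} {L : List (ℝ × ℝ)} (hL : PosList (p :: L)) : 0 < p.1 ∧ 0 < p.2 :=
  hL p List.mem_cons_self

lemma PosList.sum_fst_nonneg {L : List (ℝ × ℝ)} (hL : PosList L) : 0 ≤ (L.map Prod.fst).sum :=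
  List.sum_nonneg fun _ ha => by
    obtain ⟨r, hr, rfl⟩ := List.mem_map.mp ha
    exact (hL r hr).1.le

noncomputable def clip (t : ℝ) : ℝ := Set.projIcc 0 1 zero_le_one t

lemma clip_of_nonpos {t : ℝ} (ht : t ≤ 0) : clip t = 0 := by
  simp [clip, Set.projIcc_of_le_left _ ht]

lemma clip_of_one_le {t : ℝ} (ht : 1 ≤ t) : clip t = 1 := by
  simp [clip, Set.projIcc_of_right_le _ ht]

lemma clip_of_mem {t : ℝ} (h0 : 0 ≤ t) (h1 : t ≤ 1) : clip t = t := by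
  simp [clip, Set.projIcc_of_mem _ ⟨h0, h1⟩]

lemma clip_nonneg (t : ℝ) : 0 ≤ clip t := (Set.projIcc 0 1 zero_le_one t).2.1

lemma monotone_clip : Monotone clip := fun _ _ hst => Set.monotone_projIcc zero_le_one hst

lemma clip_sub_clip_le {s t : ℝ} (hst : s ≤ t) : clip t - clip s ≤ t - s :=
  (le_abs_self _).trans <| (Set.abs_projIcc_sub_projIcc zero_le_one).trans
    (abs_of_nonneg (sub_nonneg.2 hst)).le

lemma continuous_clip : Continuous clip := continuous_subtype_val.comp continuous_projIcc

lemma clip_one_sub_div {l x : ℝ} (hl : 0 < l) (hx0 : 0 ≤ x) (hxl : x ≤ l) :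
    clip (1 - x / l) = 1 - x / l :=
  clip_of_mem (by rw [sub_nonneg, div_le_one hl]; exact hxl) (by linarith [div_nonneg hx0 hl.le])

lemma clip_one_sub_div_of_le {l x : ℝ} (hl : 0 < l) (hlx : l ≤ x) : clip (1 - x / l) = 0 :=
  clip_of_nonpos (by rw [sub_nonpos, one_le_div hl]; exact hlx)

noncomputable def boundary : List (ℝ × ℝ) → ℝ → ℝ
  | [], _ => 0
  | (l, h) :: L, x => h * clip (1 - x / l) + boundary L (x - l)

lemma boundary_cons (l h : ℝ) (L : List (ℝ × ℝ)) (x : ℝ) :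
    boundary ((l, h) :: L) x = h * clip (1 - x / l) + boundary L (x - l) := rfl

lemma continuous_boundary (L : List (ℝ × ℝ)) : Continuous (boundary L) := by
  induction L with
  | nil => exact continuous_const
  | cons p L ih =>
    exact (continuous_const.mul (continuous_clip.comp (by fun_prop))).add
      (ih.comp (by fun_prop))

lemma boundary_nonneg {L : List (ℝ × ℝ)} (hL : PosList L) (x : ℝ) : 0 ≤ boundary L x := by
  induction L generalizing x with
  | nil => exact le_rfl
  | cons p L ih =>
    rw [boundary_cons]
    have := mul_nonneg hL.head.2.le (clip_nonneg (1 - x / p.1))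
    linarith [ih hL.of_cons (x - p.1)]

lemma boundary_of_nonpos {L : List (ℝ × ℝ)} (hL : PosList L) {x : ℝ} (hx : x ≤ 0) :
    boundary L x = (L.map Prod.snd).sum := by
  induction L generalizing x with
  | nil => rfl
  | cons p L ih =>
    have hl := hL.head.1
    rw [boundary_cons, clip_of_one_le (by linarith [div_nonpos_of_nonpos_of_nonneg hx hl.le]),
      ih hL.of_cons (by linarith), List.map_cons, List.sum_cons, mul_one]

lemma boundary_of_sum_le {L : List (ℝ × ℝ)} (hL : PosList L) {x : ℝ}
    (hx : (L.map Prod.fst).sum ≤ x) : boundary L x = 0 := by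
  induction L generalizing x with
  | nil => rfl
  | cons p L ih =>
    have hl := hL.head.1
    have hsum := hL.of_cons.sum_fst_nonneg
    rw [List.map_cons, List.sum_cons] at hx
    rw [boundary_cons, clip_one_sub_div_of_le hl (by linarith),
      ih hL.of_cons (by linarith), mul_zero, add_zero]

lemma boundary_antitone {L : List (ℝ × ℝ)} (hL : PosList L) : Antitone (boundary L) := by
  induction L with
  | nil => exact fun _ _ _ => le_rfl
  | cons p L ih =>
    intro x y hxy
    have hclip : clip (1 - y / p.1) ≤ clip (1 - x / p.1) :=
      monotone_clip (by gcongr; exact hL.head.1.le)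
    rw [boundary_cons, boundary_cons]
    gcongr
    · exact hL.head.2.le
    · exact ih hL.of_cons (by linarith)

lemma boundary_le_add_mul {L : List (ℝ × ℝ)} (hL : PosList L) {s : ℝ} (hs0 : 0 ≤ s)
    (hs : ∀ q ∈ L, q.2 ≤ s * q.1) {x y : ℝ} (hxy : x ≤ y) :
    boundary L x ≤ boundary L y + s * (y - x) := by
  induction L generalizing x y with
  | nil => simpa [boundary] using mul_nonneg hs0 (sub_nonneg.2 hxy)
  | cons p L ih =>
    obtain ⟨l, h⟩ := p
    obtain ⟨hl, hh⟩ : 0 < l ∧ 0 < h := hL.head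
    have hsl : h / l ≤ s := (div_le_iff₀ hl).2 (hs _ List.mem_cons_self)
    -- left of `l` only the first edge moves, right of `l` only the others do
    have hleft : ∀ u v, u ≤ v → v ≤ l →
        boundary ((l, h) :: L) u ≤ boundary ((l, h) :: L) v + s * (v - u) := by
      intro u v huv hvl
      have hclip := clip_sub_clip_le (by gcongr : 1 - v / l ≤ 1 - u / l)
      rw [boundary_cons, boundary_cons, boundary_of_nonpos hL.of_cons (by linarith : u - l ≤ 0),
        boundary_of_nonpos hL.of_cons (by linarith : v - l ≤ 0)]
      have : h * (clip (1 - u / l) - clip (1 - v / l)) ≤ s * (v - u) :=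
        calc h * (clip (1 - u / l) - clip (1 - v / l))
            ≤ h * ((1 - u / l) - (1 - v / l)) := mul_le_mul_of_nonneg_left hclip hh.le
          _ = (v - u) * (h / l) := by ring
          _ ≤ (v - u) * s := mul_le_mul_of_nonneg_left hsl (sub_nonneg.2 huv)
          _ = s * (v - u) := mul_comm _ _
      linarith
    have hright : ∀ u v, u ≤ v → l ≤ u →
        boundary ((l, h) :: L) u ≤ boundary ((l, h) :: L) v + s * (v - u) := by
      intro u v huv hlu
      rw [boundary_cons, boundary_cons, clip_one_sub_div_of_le hl hlu,
        clip_one_sub_div_of_le hl (hlu.trans huv)]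
      have := ih hL.of_cons (fun q hq => hs q (List.mem_cons_of_mem _ hq))
        (by linarith : u - l ≤ v - l)
      rw [sub_sub_sub_cancel_right] at this
      linarith
    rcases le_total y l with hyl | hly
    · exact hleft x y hxy hyl
    rcases le_total l x with hlx | hxl
    · exact hright x y hxy hlx
    · linarith [hleft x l hxl le_rfl, hright l y hly le_rfl]

lemma convex_Q2 : Convex ℝ Q2 := by
  rintro p ⟨hp1, hp2⟩ q ⟨hq1, hq2⟩ a b ha hb -
  exact ⟨by simp only [Prod.fst_add, Prod.smul_fst, smul_eq_mul]; positivity,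
    by simp only [Prod.snd_add, Prod.smul_snd, smul_eq_mul]; positivity⟩

lemma sumList_nil : sumList [] = Q2 := by
  simpa [sumList] using convex_Q2.convexHull_eq

lemma sumList_cons (p : ℝ × ℝ) (L : List (ℝ × ℝ)) :
    sumList (p :: L) = elemPoly p.1 p.2 + sumList L := by
  simp only [sumList, List.map_cons, List.sum_cons, convexHull_add,
    (convex_convexHull ℝ _).convexHull_eq, elemPoly, convex_Q2.convexHull_eq]
  abel

lemma sumList_perm {L L' : List (ℝ × ℝ)} (h : L.Perm L') : sumList L = sumList L' := by
  rw [sumList, sumList, (h.map _).sum_eq]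

lemma elemPoly_subset {l h : ℝ} (hl : 0 < l) (hh : 0 < h) :
    elemPoly l h ⊆ {p | 0 ≤ p.1 ∧ 0 ≤ p.2 ∧ l * h ≤ h * p.1 + l * p.2} := by
  refine convexHull_min ?_ ?_
  · rintro _ (⟨_, rfl, q, ⟨hq1, hq2⟩, rfl⟩ | ⟨_, rfl, q, ⟨hq1, hq2⟩, rfl⟩) <;>
      simp only [Set.mem_ofPred_eq, Prod.fst_add, Prod.snd_add] <;>
      refine ⟨by linarith, by linarith, by nlinarith⟩
  · rintro p ⟨hp1, hp2, hp3⟩ q ⟨hq1, hq2, hq3⟩ a b ha hb hab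
    simp only [Set.mem_ofPred_eq, Prod.fst_add, Prod.snd_add, Prod.smul_fst, Prod.smul_snd,
      smul_eq_mul]
    refine ⟨by positivity, by positivity, ?_⟩
    have hlh : a * (l * h) + b * (l * h) = l * h := by rw [← add_mul, hab, one_mul]
    linarith [mul_le_mul_of_nonneg_left hp3 ha, mul_le_mul_of_nonneg_left hq3 hb]

lemma mul_clip_le_of_mem_elemPoly {l h : ℝ} (hl : 0 < l) (hh : 0 < h) {a : ℝ × ℝ}
    (ha : a ∈ elemPoly l h) : 0 ≤ a.1 ∧ h * clip (1 - a.1 / l) ≤ a.2 := by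
  obtain ⟨ha1, ha2, ha3⟩ := elemPoly_subset hl hh ha
  refine ⟨ha1, ?_⟩
  rcases le_total l a.1 with hla | hal
  · rwa [clip_one_sub_div_of_le hl hla, mul_zero]
  · rw [clip_one_sub_div hl ha1 hal,
      show h * (1 - a.1 / l) = (l * h - h * a.1) / l by field_simp, div_le_iff₀ hl]
    linarith

lemma mem_elemPoly_of_le {l h m : ℝ} (hl : 0 < l) (hm0 : 0 ≤ m) (hml : m ≤ l) :
    (m, h * (1 - m / l)) ∈ elemPoly l h := by
  have hvert : ((0 : ℝ), h) ∈ ({((0 : ℝ), h)} + Q2) ∪ ({(l, (0 : ℝ))} + Q2) :=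
    Or.inl ⟨_, rfl, 0, ⟨le_rfl, le_rfl⟩, add_zero _⟩
  have hhor : (l, (0 : ℝ)) ∈ ({((0 : ℝ), h)} + Q2) ∪ ({(l, (0 : ℝ))} + Q2) :=
    Or.inr ⟨_, rfl, 0, ⟨le_rfl, le_rfl⟩, add_zero _⟩
  refine segment_subset_convexHull hvert hhor ⟨1 - m / l, m / l, ?_, div_nonneg hm0 hl.le,
    by ring, ?_⟩
  · rw [sub_nonneg, div_le_one hl]; exact hml
  · ext
    · simp [div_mul_cancel₀ _ hl.ne']
    · simp [mul_comm]

def SlopeSorted (L : List (ℝ × ℝ)) : Prop := L.Pairwise fun p q => q.2 / q.1 ≤ p.2 / p.1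

lemma SlopeSorted.le_mul_head {l h : ℝ} {L : List (ℝ × ℝ)} (hL : PosList ((l, h) :: L))
    (hS : SlopeSorted ((l, h) :: L)) : ∀ q ∈ L, q.2 ≤ h / l * q.1 := fun q hq =>
  (div_le_iff₀ (hL.of_cons q hq).1).1 ((List.pairwise_cons.1 hS).1 q hq)

lemma boundary_cons_add_le {l h : ℝ} {L : List (ℝ × ℝ)} (hL : PosList ((l, h) :: L))
    (hS : SlopeSorted ((l, h) :: L)) {x y : ℝ} (hx : 0 ≤ x) (hy : 0 ≤ y) :
    boundary ((l, h) :: L) (x + y) ≤ h * clip (1 - x / l) + boundary L y := by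
  obtain ⟨hl, hh⟩ : 0 < l ∧ 0 < h := hL.head
  have hslope {u v : ℝ} (huv : u ≤ v) :=
    boundary_le_add_mul hL.of_cons (div_nonneg hh.le hl.le) (hS.le_mul_head hL) huv
  rw [boundary_cons]
  rcases le_total (x + y) l with hxyl | hlxy
  · have := hslope hy
    rw [clip_one_sub_div hl (add_nonneg hx hy) hxyl, clip_one_sub_div hl hx (by linarith),
      boundary_of_nonpos hL.of_cons (by linarith), ← boundary_of_nonpos hL.of_cons le_rfl]
    have : h * (1 - (x + y) / l) = h * (1 - x / l) - h / l * (y - 0) := by ring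
    linarith
  rw [clip_one_sub_div_of_le hl hlxy, mul_zero, zero_add]
  rcases le_total x l with hxl | hlx
  · have := hslope (by linarith : x + y - l ≤ y)
    have : h / l * (y - (x + y - l)) = h * (1 - x / l) := by field_simp; ring
    rw [clip_one_sub_div hl hx hxl]
    linarith
  · linarith [boundary_antitone hL.of_cons (by linarith : y ≤ x + y - l),
      mul_nonneg hh.le (clip_nonneg (1 - x / l))]

lemma boundary_cons_eq_min {l h : ℝ} {L : List (ℝ × ℝ)} (hL : PosList ((l, h) :: L)) {x : ℝ}
    (hx : 0 ≤ x) :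
    boundary ((l, h) :: L) x = h * (1 - min x l / l) + boundary L (x - min x l) := by
  obtain ⟨hl, -⟩ : 0 < l ∧ 0 < h := hL.head
  rw [boundary_cons]
  rcases le_total x l with hxl | hlx
  · rw [min_eq_left hxl, clip_one_sub_div hl hx hxl, boundary_of_nonpos hL.of_cons (by linarith),
      sub_self, boundary_of_nonpos hL.of_cons le_rfl]
  · rw [min_eq_right hlx, div_self hl.ne', sub_self, clip_one_sub_div_of_le hl hlx]

lemma sumList_eq_epigraph {L : List (ℝ × ℝ)} (hL : PosList L) (hS : SlopeSorted L) :
    sumList L = {p | 0 ≤ p.1 ∧ boundary L p.1 ≤ p.2} := by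
  induction L with
  | nil =>
    ext p
    simp [sumList_nil, Q2, boundary]
  | cons q L ih =>
    obtain ⟨l, h⟩ := q
    obtain ⟨hl, hh⟩ : 0 < l ∧ 0 < h := hL.head
    rw [sumList_cons, ih hL.of_cons (List.pairwise_cons.1 hS).2]
    ext p
    constructor
    · rintro ⟨a, ha, c, ⟨hc1, hc2⟩, rfl⟩
      obtain ⟨ha1, ha2⟩ := mul_clip_le_of_mem_elemPoly hl hh ha
      exact ⟨add_nonneg ha1 hc1,
        (boundary_cons_add_le hL hS ha1 hc1).trans (by simpa using add_le_add ha2 hc2)⟩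
    · rintro ⟨hp1, hp2⟩
      set m := min p.1 l
      refine ⟨(m, h * (1 - m / l)), mem_elemPoly_of_le hl (le_min hp1 hl.le) (min_le_right _ _),
        p - (m, h * (1 - m / l)), ⟨?_, ?_⟩, add_sub_cancel _ _⟩
      · exact sub_nonneg.2 (min_le_left p.1 l)
      · rw [boundary_cons_eq_min hL hp1] at hp2
        simp only [Prod.fst_sub, Prod.snd_sub]
        linarith

lemma polyHt_sumList_of_sorted {L : List (ℝ × ℝ)} (hL : PosList L) (hS : SlopeSorted L) :
    polyHt (sumList L) = (L.map Prod.snd).sum := by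
  have hslice : {y | ((0 : ℝ), y) ∈ sumList L} = Set.Ici (boundary L 0) := by
    ext y
    simp [sumList_eq_epigraph hL hS]
  rw [polyHt, hslice, csInf_Ici, boundary_of_nonpos hL le_rfl]

def minPairSum (L : List (ℝ × ℝ)) : ℝ :=
  (L.map fun p => (L.map fun q => min (p.1 * q.2) (q.1 * p.2)).sum).sum

lemma minPairSum_perm {L L' : List (ℝ × ℝ)} (h : L.Perm L') : minPairSum L = minPairSum L' := by
  rw [minPairSum, minPairSum, (h.map _).sum_eq]
  exact congrArg List.sum (List.map_congr_left fun p _ => (h.map _).sum_eq)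

lemma minPairSum_cons_of_sorted {l h : ℝ} {L : List (ℝ × ℝ)} (hL : PosList ((l, h) :: L))
    (hS : SlopeSorted ((l, h) :: L)) :
    minPairSum ((l, h) :: L) = l * h + 2 * (l * (L.map Prod.snd).sum) + minPairSum L := by
  have hrow : (L.map fun q => min (l * q.2) (q.1 * h)) = L.map fun q => l * q.2 :=
    List.map_congr_left fun q hq => min_eq_left <| by
      have := mul_le_mul_of_nonneg_left (hS.le_mul_head hL q hq) hL.head.1.le
      rwa [← mul_assoc, mul_div_cancel₀ _ hL.head.1.ne', mul_comm h] at this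
  have hcol : (L.map fun p => min (p.1 * h) (l * p.2)) = L.map fun q => l * q.2 := by
    simp_rw [min_comm (_ * h)]
    exact hrow
  simp only [minPairSum, List.map_cons, List.sum_cons, List.sum_map_add, hrow, hcol, min_self,
    List.sum_map_mul_left]
  ring

lemma integral_mul_clip {l b : ℝ} (hl : 0 < l) (hlb : l ≤ b) (h : ℝ) :
    ∫ x in (0 : ℝ)..b, h * clip (1 - x / l) = l * h / 2 := by
  have hcont : Continuous fun x => h * clip (1 - x / l) :=
    continuous_const.mul (continuous_clip.comp (by fun_prop))
  rw [← intervalIntegral.integral_add_adjacent_intervals (hcont.intervalIntegrable 0 l)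
    (hcont.intervalIntegrable l b)]
  have hramp : ∫ x in (0 : ℝ)..l, h * clip (1 - x / l) = ∫ x in (0 : ℝ)..l, h * (1 - x / l) :=
    intervalIntegral.integral_congr fun x hx => by
      rw [Set.uIcc_of_le hl.le] at hx
      rw [clip_one_sub_div hl hx.1 hx.2]
  have hflat : ∫ x in l..b, h * clip (1 - x / l) = ∫ _ in l..b, (0 : ℝ) :=
    intervalIntegral.integral_congr fun x hx => by
      rw [Set.uIcc_of_le hlb] at hx
      rw [clip_one_sub_div_of_le hl hx.1, mul_zero]
  rw [hramp, hflat, intervalIntegral.integral_zero, add_zero,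
    intervalIntegral.integral_comp_div (fun x => h * (1 - x)) hl.ne',
    intervalIntegral.integral_comp_sub_left (fun x => h * x), intervalIntegral.integral_const_mul]
  rw [zero_div, div_self hl.ne', sub_zero, sub_self, integral_id, smul_eq_mul]
  ring

lemma integral_boundary {L : List (ℝ × ℝ)} (hL : PosList L) (hS : SlopeSorted L) :
    ∫ x in (0 : ℝ)..(L.map Prod.fst).sum, boundary L x = minPairSum L / 2 := by
  induction L with
  | nil => simp [boundary, minPairSum]
  | cons q L ih =>
    obtain ⟨l, h⟩ := q
    obtain ⟨hl, hh⟩ : 0 < l ∧ 0 < h := hL.head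
    set S := (L.map Prod.fst).sum
    have hS0 : 0 ≤ S := hL.of_cons.sum_fst_nonneg
    have hint {a b : ℝ} : IntervalIntegrable (boundary L) volume a b :=
      (continuous_boundary L).intervalIntegrable a b
    have hplateau : ∫ x in -l..0, boundary L x = l * (L.map Prod.snd).sum := by
      rw [intervalIntegral.integral_congr (g := fun _ => (L.map Prod.snd).sum) fun x hx =>
        boundary_of_nonpos hL.of_cons (by rw [Set.uIcc_of_le (by linarith)] at hx; exact hx.2)]
      simp
    have hshift : ∫ x in (0 : ℝ)..l + S, boundary L (x - l)
        = l * (L.map Prod.snd).sum + minPairSum L / 2 := by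
      rw [intervalIntegral.integral_comp_sub_right (boundary L), zero_sub, add_sub_cancel_left,
        ← intervalIntegral.integral_add_adjacent_intervals hint hint, hplateau,
        ih hL.of_cons (List.pairwise_cons.1 hS).2]
    simp only [List.map_cons, List.sum_cons, boundary_cons]
    rw [intervalIntegral.integral_add (f := fun x => h * clip (1 - x / l))
        (g := fun x => boundary L (x - l))
        ((continuous_const.mul (continuous_clip.comp (by fun_prop))).intervalIntegrable _ _)
        (((continuous_boundary L).comp (by fun_prop)).intervalIntegrable _ _),
      integral_mul_clip hl (by linarith) h, hshift, minPairSum_cons_of_sorted hL hS]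
    ring

-- `regionBetween` is open in the vertical direction, so the null set `y = 0` has to be removed.
lemma Q2_sdiff_sumList_sdiff_axis {L : List (ℝ × ℝ)} (hL : PosList L) (hS : SlopeSorted L) :
    (Q2 \ sumList L) \ ((Set.univ : Set ℝ) ×ˢ ({0} : Set ℝ))
      = regionBetween (fun _ => 0) (boundary L) (Set.Icc 0 (L.map Prod.fst).sum) := by
  rw [sumList_eq_epigraph hL hS]
  ext ⟨x, y⟩
  simp only [Q2, regionBetween, Set.mem_sdiff, Set.mem_prod, Set.mem_ofPred_eq, Set.mem_univ,
    Set.mem_singleton_iff, Set.mem_Icc, Set.mem_Ioo, true_and, not_and, not_le]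
  constructor
  · rintro ⟨⟨⟨hx, hy⟩, hyF⟩, hy0⟩
    have hyF := hyF hx
    refine ⟨⟨hx, le_of_not_gt fun hx' => ?_⟩, lt_of_le_of_ne hy (Ne.symm hy0), hyF⟩
    linarith [boundary_of_sum_le hL hx'.le]
  · rintro ⟨⟨hx, -⟩, hy, hyF⟩
    exact ⟨⟨⟨hx, hy.le⟩, fun _ => hyF⟩, hy.ne'⟩

lemma polyVol_sumList_of_sorted {L : List (ℝ × ℝ)} (hL : PosList L) (hS : SlopeSorted L) :
    polyVol (sumList L) = minPairSum L / 2 := by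
  set B := (L.map Prod.fst).sum
  have hB : 0 ≤ B := hL.sum_fst_nonneg
  have hnull : volume ((Set.univ : Set ℝ) ×ˢ ({0} : Set ℝ)) = 0 := by
    simp [Measure.volume_eq_prod, Measure.prod_prod]
  have hint : IntegrableOn (boundary L) (Set.Icc 0 B) :=
    (continuous_boundary L).integrableOn_Icc
  have hvol : volume (regionBetween (fun _ : ℝ => (0 : ℝ)) (boundary L) (Set.Icc 0 B))
      = ENNReal.ofReal (minPairSum L / 2) := by
    rw [Measure.volume_eq_prod, volume_regionBetween_eq_integral integrableOn_zero hint
      measurableSet_Icc fun x _ => boundary_nonneg hL x, ← integral_boundary hL hS,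
      intervalIntegral.integral_of_le hB, integral_Icc_eq_integral_Ioc]
    simp
  have hnonneg : 0 ≤ minPairSum L / 2 := by
    rw [← integral_boundary hL hS]
    exact intervalIntegral.integral_nonneg hB fun x _ => boundary_nonneg hL x
  rw [polyVol, ← measure_sdiff_null hnull, Q2_sdiff_sumList_sdiff_axis hL hS, hvol,
    ENNReal.toReal_ofReal hnonneg]

lemma exists_perm_slopeSorted {L : List (ℝ × ℝ)} (hL : PosList L) :
    ∃ L', L.Perm L' ∧ PosList L' ∧ SlopeSorted L' := by
  let le : ℝ × ℝ → ℝ × ℝ → Bool := fun p q => decide (q.2 / q.1 ≤ p.2 / p.1)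
  have hperm := List.mergeSort_perm L le
  refine ⟨L.mergeSort le, hperm.symm, fun p hp => hL p (hperm.subset hp), ?_⟩
  refine (List.pairwise_mergeSort (le := le) ?_ ?_ L).imp fun hpq => of_decide_eq_true hpq
  · simp only [le, decide_eq_true_eq]
    exact fun a b c hab hbc => hbc.trans hab
  · simp only [le, Bool.or_eq_true, decide_eq_true_eq]
    exact fun a b => le_total _ _

lemma polyHt_sumList {L : List (ℝ × ℝ)} (hL : PosList L) :
    polyHt (sumList L) = (L.map Prod.snd).sum := by
  obtain ⟨L', hperm, hL', hS⟩ := exists_perm_slopeSorted hL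
  rw [sumList_perm hperm, polyHt_sumList_of_sorted hL' hS, (hperm.map _).sum_eq]

lemma polyVol_sumList {L : List (ℝ × ℝ)} (hL : PosList L) :
    polyVol (sumList L) = minPairSum L / 2 := by
  obtain ⟨L', hperm, hL', hS⟩ := exists_perm_slopeSorted hL
  rw [sumList_perm hperm, polyVol_sumList_of_sorted hL' hS, minPairSum_perm hperm]

lemma posList_prodList {L₁ L₂ : List (ℝ × ℝ)} (h₁ : PosList L₁) (h₂ : PosList L₂) :
    PosList (prodList L₁ L₂) := by
  intro r hr
  obtain ⟨p, hp, hr⟩ := List.mem_flatMap.1 hr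
  obtain ⟨q, hq, rfl⟩ := List.mem_map.1 hr
  obtain ⟨hp1, hp2⟩ := h₁ p hp
  obtain ⟨hq1, hq2⟩ := h₂ q hq
  exact ⟨mul_pos hp1 hq1, lt_min (mul_pos hp1 hq2) (mul_pos hq1 hp2)⟩

lemma sum_snd_prodList_self (L : List (ℝ × ℝ)) :
    ((prodList L L).map Prod.snd).sum = minPairSum L := by
  simp [minPairSum, prodList, List.flatMap, List.sum_flatten, Function.comp_def]

lemma minPairSum_eq_sum_flatMap (L : List (ℝ × ℝ)) :
    minPairSum L = (L.flatMap fun p => L.map fun q => min (p.1 * q.2) (q.1 * p.2)).sum := by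
  simp [minPairSum, List.flatMap, List.sum_flatten, Function.comp_def]

/-- For `N₁ = Σᵢ {ℓᵢ/hᵢ}`, the height of `N₁ * N₁` equals `Σ_{i,j} min(ℓᵢh_j, ℓ_jhᵢ)`,
which equals twice the area enclosed by `N₁`. -/
theorem polyHt_prod_self (L : List (ℝ × ℝ)) (hL : PosList L) :
    polyHt (sumList (prodList L L)) =
      (L.flatMap fun p => L.map fun q => min (p.1 * q.2) (q.1 * p.2)).sum ∧
    polyHt (sumList (prodList L L)) = 2 * polyVol (sumList L) := by
  have hHt : polyHt (sumList (prodList L L)) = minPairSum L := by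
    rw [polyHt_sumList (posList_prodList hL hL), sum_snd_prodList_self]
  refine ⟨hHt.trans (minPairSum_eq_sum_flatMap L), ?_⟩
  rw [hHt, polyVol_sumList hL]
  ring
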